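/- Let Q ≥ 1, let t_0,…,t_{Q-1} be the zeros of the Legendre polynomial P_Q with associated Gauss–Legendre weights ω_0,…,ω_{Q-1}, and let m ≥ 0. Then for all integers n, n' with m ≤ n, n' ≤ Q-1 satisfying n + n' ≤ 2Q - 1, Σ_{k=0}^{Q-1} ω_k P_{n,m}(t_k) P_{n',m}(t_k) = (2/(2n+1)) · ((n+m)!/(n-m)!) · δ_{n}^{n'}. -/

import Mathlib

open Polynomial

/-- The Legendre polynomial `P_n`, via the Rodrigues formula. -/
noncomputable def legendreP (n : ℕ) : Polynomial ℝ :=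
  Polynomial.C (1 / ((2 : ℝ) ^ n * (Nat.factorial n : ℝ))) *
    Polynomial.derivative^[n] ((Polynomial.X ^ 2 - 1) ^ n)

/-- The associated Legendre function `P_{n,m}` (without the Condon–Shortley phase). -/
noncomputable def assocLegendre (n m : ℕ) (t : ℝ) : ℝ :=
  (Real.sqrt (1 - t ^ 2)) ^ m * Polynomial.eval t (Polynomial.derivative^[m] (legendreP n))

open scoped Nat

/-! On the nodes, `P_{n,m} P_{n',m} = (1 - t²)^m P_n^{(m)} P_{n'}^{(m)}`, a polynomial of degree at
most `n + n' ≤ 2Q - 1`, so the quadrature sum is the integral over `[-1, 1]`. Differentiating the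
Legendre equation `m` times gives
`((1 - t²)^{m+1} P_n^{(m+1)})' = -(n(n+1) - m(m+1)) (1 - t²)^m P_n^{(m)}`, and one integration by
parts turns this into `I_{m+1} = (n + m + 1)(n - m) I_m` for the integrals `I_m` of these products.
This reduces the claim to `m = 0`, the orthogonality of the Legendre polynomials, which follows
from the Rodrigues formula by `n` integrations by parts. -/

theorem integral_eval_derivative (q : ℝ[X]) (a b : ℝ) :
    ∫ x in a..b, (derivative q).eval x = q.eval b - q.eval a :=
  intervalIntegral.integral_eq_sub_of_hasDerivAt (fun x _ => q.hasDerivAt x)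
    ((Polynomial.continuous _).intervalIntegrable _ _)

theorem integral_eval_mul_derivative_of_eval_eq_zero {a b : ℝ} {f : ℝ[X]} (g : ℝ[X])
    (ha : f.eval a = 0) (hb : f.eval b = 0) :
    ∫ x in a..b, (f * derivative g).eval x = -∫ x in a..b, (derivative f * g).eval x := by
  simp only [eval_mul]
  rw [intervalIntegral.integral_mul_deriv_eq_deriv_mul (fun x _ => f.hasDerivAt x)
    (fun x _ => g.hasDerivAt x) ((Polynomial.continuous _).intervalIntegrable _ _)
    ((Polynomial.continuous _).intervalIntegrable _ _), ha, hb]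
  ring

theorem integral_eval_iterate_derivative_mul {a b : ℝ} (k : ℕ) {f : ℝ[X]} (q : ℝ[X])
    (hf : ∀ i < k, (derivative^[i] f).eval a = 0 ∧ (derivative^[i] f).eval b = 0) :
    ∫ x in a..b, (derivative^[k] f * q).eval x
      = (-1) ^ k * ∫ x in a..b, (f * derivative^[k] q).eval x := by
  induction k generalizing f with
  | zero => simp
  | succ k ih =>
    have hf' : ∀ i < k, (derivative^[i] (derivative f)).eval a = 0 ∧
        (derivative^[i] (derivative f)).eval b = 0 := fun i hi =>
      Function.iterate_succ_apply derivative i f ▸ hf (i + 1) (by omega)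
    rw [Function.iterate_succ_apply, ih hf', Function.iterate_succ_apply',
      integral_eval_mul_derivative_of_eval_eq_zero (f := f) _ (hf 0 k.succ_pos).1 (hf 0 k.succ_pos).2]
    ring

theorem iterate_derivative_natDegree {R : Type*} [Semiring R] (p : R[X]) :
    derivative^[p.natDegree] p = C ((p.natDegree ! : R) * p.leadingCoeff) := by
  rw [eq_C_of_natDegree_le_zero ((natDegree_iterate_derivative p _).trans (by omega)),
    coeff_iterate_derivative, zero_add, Nat.descFactorial_self, nsmul_eq_mul, leadingCoeff]

theorem integral_one_sub_sq_pow_succ (n : ℕ) :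
    (2 * n + 3 : ℝ) * ∫ x in (-1 : ℝ)..1, (1 - x ^ 2) ^ (n + 1)
      = (2 * n + 2 : ℝ) * ∫ x in (-1 : ℝ)..1, (1 - x ^ 2) ^ n := by
  have hderiv : derivative (X * (1 - X ^ 2) ^ (n + 1) : ℝ[X])
      = C (2 * n + 3 : ℝ) * (1 - X ^ 2) ^ (n + 1) - C (2 * n + 2 : ℝ) * (1 - X ^ 2) ^ n := by
    simp only [derivative_mul, derivative_X, derivative_pow, derivative_sub, derivative_one]
    simp only [map_add, map_mul, map_ofNat, map_natCast]
    push_cast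
    ring
  have h := integral_eval_derivative (X * (1 - X ^ 2) ^ (n + 1) : ℝ[X]) (-1) 1
  rw [hderiv] at h
  simp only [eval_sub, eval_mul, eval_C, eval_pow, eval_X, eval_one] at h
  rw [intervalIntegral.integral_sub, intervalIntegral.integral_const_mul,
    intervalIntegral.integral_const_mul] at h
  · norm_num at h
    linarith
  all_goals exact (Continuous.intervalIntegrable (by fun_prop) _ _)

theorem integral_one_sub_sq_pow (n : ℕ) :
    ∫ x in (-1 : ℝ)..1, (1 - x ^ 2) ^ n = 2 ^ (2 * n + 1) * (n ! : ℝ) ^ 2 / (2 * n + 1)! := by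
  induction n with
  | zero => norm_num
  | succ n ih =>
    have h := integral_one_sub_sq_pow_succ n
    rw [ih] at h
    have hfac : ((2 * (n + 1) + 1)! : ℝ) = (2 * n + 3) * (2 * n + 2) * (2 * n + 1)! := by
      rw [show 2 * (n + 1) + 1 = 2 * n + 1 + 1 + 1 by ring, Nat.factorial_succ,
        Nat.factorial_succ]
      push_cast; ring
    rw [hfac, Nat.factorial_succ]
    field_simp at h ⊢
    push_cast
    linear_combination (2 * (n : ℝ) + 2) * h

noncomputable def rodriguesPoly (n : ℕ) : ℝ[X] := (X ^ 2 - 1) ^ n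

theorem legendreP_eq (n : ℕ) :
    legendreP n = C (1 / ((2 : ℝ) ^ n * n !)) * derivative^[n] (rodriguesPoly n) := rfl

theorem rodriguesPoly_monic (n : ℕ) : (rodriguesPoly n).Monic := by
  simpa [rodriguesPoly] using (monic_X_pow_sub_C (1 : ℝ) two_ne_zero).pow n

theorem natDegree_rodriguesPoly (n : ℕ) : (rodriguesPoly n).natDegree = 2 * n := by
  rw [rodriguesPoly, natDegree_pow, ← C_1, natDegree_X_pow_sub_C, mul_comm]

theorem eval_rodriguesPoly (n : ℕ) (x : ℝ) :
    (rodriguesPoly n).eval x = (-1) ^ n * (1 - x ^ 2) ^ n := by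
  simp [rodriguesPoly, ← mul_pow]

theorem eval_iterate_derivative_rodriguesPoly_eq_zero {n k : ℕ} (hk : k < n) {x : ℝ}
    (hx : x ^ 2 = 1) : (derivative^[k] (rodriguesPoly n)).eval x = 0 := by
  obtain ⟨r, hr⟩ := pow_sub_dvd_iterate_derivative_pow ((X : ℝ[X]) ^ 2 - 1) n k
  rw [rodriguesPoly, hr, eval_mul, eval_pow]
  simp [hx, Nat.sub_ne_zero_of_lt hk]

theorem iterate_derivative_legendreP (n k : ℕ) :
    derivative^[k] (legendreP n)
      = C (1 / ((2 : ℝ) ^ n * n !)) * derivative^[n + k] (rodriguesPoly n) := by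
  rw [legendreP_eq, iterate_derivative_C_mul, add_comm, Function.iterate_add_apply]

theorem natDegree_iterate_derivative_legendreP_le (n k : ℕ) :
    (derivative^[k] (legendreP n)).natDegree ≤ n - k := by
  rw [iterate_derivative_legendreP]
  refine (natDegree_C_mul_le _ _).trans ?_
  have := natDegree_iterate_derivative (rodriguesPoly n) (n + k)
  rw [natDegree_rodriguesPoly] at this
  omega

theorem natDegree_legendreP_le (n : ℕ) : (legendreP n).natDegree ≤ n :=
  natDegree_iterate_derivative_legendreP_le n 0

theorem iterate_derivative_legendreP_self (n : ℕ) :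
    derivative^[n] (legendreP n) = C (((2 * n)! : ℝ) / (2 ^ n * n !)) := by
  rw [iterate_derivative_legendreP, ← two_mul, ← natDegree_rodriguesPoly,
    iterate_derivative_natDegree, (rodriguesPoly_monic n).leadingCoeff, ← C_mul]
  congr 1
  ring

theorem integral_legendreP_mul (n : ℕ) (q : ℝ[X]) :
    ∫ x in (-1 : ℝ)..1, (legendreP n * q).eval x
      = (-1 : ℝ) ^ n / (2 ^ n * n !)
        * ∫ x in (-1 : ℝ)..1, (rodriguesPoly n * derivative^[n] q).eval x := by
  have hbdry : ∀ i < n, (derivative^[i] (rodriguesPoly n)).eval (-1) = 0 ∧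
      (derivative^[i] (rodriguesPoly n)).eval 1 = 0 := fun i hi =>
    ⟨eval_iterate_derivative_rodriguesPoly_eq_zero hi (by norm_num),
      eval_iterate_derivative_rodriguesPoly_eq_zero hi (by norm_num)⟩
  simp only [legendreP_eq, mul_assoc, eval_mul (p := C _), eval_C,
    intervalIntegral.integral_const_mul, integral_eval_iterate_derivative_mul n q hbdry]
  ring

theorem integral_legendreP_mul_eq_zero {n : ℕ} {q : ℝ[X]} (hq : q.natDegree < n) :
    ∫ x in (-1 : ℝ)..1, (legendreP n * q).eval x = 0 := by
  rw [integral_legendreP_mul, iterate_derivative_eq_zero hq]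
  simp

theorem integral_legendreP_mul_self (n : ℕ) :
    ∫ x in (-1 : ℝ)..1, (legendreP n * legendreP n).eval x = 2 / (2 * n + 1) := by
  rw [integral_legendreP_mul, iterate_derivative_legendreP_self]
  simp only [eval_mul, eval_C, eval_rodriguesPoly, intervalIntegral.integral_mul_const,
    intervalIntegral.integral_const_mul, integral_one_sub_sq_pow]
  rw [Nat.factorial_succ]
  have h : ((-1 : ℝ) ^ n) ^ 2 = 1 := by rw [← pow_mul, pow_mul', neg_one_sq, one_pow]
  field_simp
  push_cast
  rw [h]
  ring

theorem integral_legendreP_mul_legendreP (n n' : ℕ) :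
    ∫ x in (-1 : ℝ)..1, (legendreP n * legendreP n').eval x
      = if n = n' then (2 : ℝ) / (2 * n + 1) else 0 := by
  rcases lt_trichotomy n n' with h | rfl | h
  · rw [if_neg h.ne, mul_comm]
    exact integral_legendreP_mul_eq_zero ((natDegree_legendreP_le n).trans_lt h)
  · rw [if_pos rfl, integral_legendreP_mul_self]
  · rw [if_neg h.ne']
    exact integral_legendreP_mul_eq_zero ((natDegree_legendreP_le n').trans_lt h)

theorem rodriguesPoly_ode (n : ℕ) :
    (X ^ 2 - 1) * derivative (rodriguesPoly n) = C (2 * n : ℝ) * X * rodriguesPoly n := by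
  cases n with
  | zero => simp [rodriguesPoly]
  | succ n =>
    simp only [rodriguesPoly, derivative_pow, derivative_sub, derivative_X, derivative_one,
      Nat.add_sub_cancel, map_mul, map_ofNat, map_natCast]
    push_cast
    ring

theorem rodriguesPoly_iterate_derivative_ode (n k : ℕ) :
    (X ^ 2 - 1) * derivative^[k + 2] (rodriguesPoly n)
      = C (2 * (n - (k + 1)) : ℝ) * X * derivative^[k + 1] (rodriguesPoly n)
        + C ((k + 1) * (2 * n - k) : ℝ) * derivative^[k] (rodriguesPoly n) := by
  induction k with
  | zero =>
    have h := congrArg derivative (rodriguesPoly_ode n)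
    simp only [derivative_mul, derivative_sub, derivative_X_pow, derivative_one, derivative_X,
      derivative_C] at h
    simp only [zero_add, Function.iterate_succ_apply', Function.iterate_zero_apply,
      map_mul, map_sub, map_add, map_ofNat, map_natCast, map_one] at h ⊢
    push_cast at h ⊢
    linear_combination h
  | succ k ih =>
    have h := congrArg derivative ih
    simp only [derivative_mul, derivative_add, derivative_sub, derivative_X_pow, derivative_one,
      derivative_X, derivative_C, ← Function.iterate_succ_apply' derivative] at h
    simp only [map_mul, map_sub, map_add, map_ofNat, map_natCast, map_one] at h ⊢
    push_cast at h ⊢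
    linear_combination h

-- The case `n + k` of the previous lemma: `(n + k + 1)(n - k) = n(n + 1) - k(k + 1)`.
theorem iterate_derivative_legendreP_ode (n k : ℕ) :
    (X ^ 2 - 1) * derivative^[k + 2] (legendreP n)
        + C (2 * (k + 1) : ℝ) * X * derivative^[k + 1] (legendreP n)
      = C (n * (n + 1) - k * (k + 1) : ℝ) * derivative^[k] (legendreP n) := by
  have h := rodriguesPoly_iterate_derivative_ode n (n + k)
  simp only [iterate_derivative_legendreP, ← add_assoc]
  simp only [map_mul, map_sub, map_add, map_ofNat, map_natCast, map_one] at h ⊢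
  push_cast at h ⊢
  linear_combination C (1 / ((2 : ℝ) ^ n * n !)) * h

theorem derivative_one_sub_sq_pow_mul_iterate_derivative_legendreP (n i : ℕ) :
    derivative ((1 - X ^ 2) ^ (i + 1) * derivative^[i + 1] (legendreP n))
      = -C (n * (n + 1) - i * (i + 1) : ℝ)
        * ((1 - X ^ 2) ^ i * derivative^[i] (legendreP n)) := by
  have h := iterate_derivative_legendreP_ode n i
  simp only [derivative_mul, derivative_pow, derivative_sub, derivative_one, derivative_X,
    ← Function.iterate_succ_apply' derivative, Nat.add_sub_cancel]
  simp only [map_mul, map_sub, map_add, map_ofNat, map_natCast, map_one] at h ⊢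
  push_cast at h ⊢
  linear_combination (-(1 - X ^ 2 : ℝ[X]) ^ i) * h

noncomputable def assocLegendreProdPoly (n n' m : ℕ) : ℝ[X] :=
  (1 - X ^ 2) ^ m * derivative^[m] (legendreP n) * derivative^[m] (legendreP n')

theorem assocLegendre_mul_assocLegendre {t : ℝ} (ht : t ∈ Set.Icc (-1 : ℝ) 1) (n n' m : ℕ) :
    assocLegendre n m t * assocLegendre n' m t = (assocLegendreProdPoly n n' m).eval t := by
  have hsq : Real.sqrt (1 - t ^ 2) ^ m * Real.sqrt (1 - t ^ 2) ^ m = (1 - t ^ 2) ^ m := by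
    rw [← mul_pow, Real.mul_self_sqrt (by nlinarith [ht.1, ht.2])]
  simp only [assocLegendre, assocLegendreProdPoly, eval_mul, eval_pow, eval_sub, eval_one, eval_X]
  linear_combination ((derivative^[m] (legendreP n)).eval t
    * (derivative^[m] (legendreP n')).eval t) * hsq

theorem natDegree_assocLegendreProdPoly_le {n n' m : ℕ} (hmn : m ≤ n) (hmn' : m ≤ n') :
    (assocLegendreProdPoly n n' m).natDegree ≤ n + n' := by
  have h₁ : ((1 - X ^ 2 : ℝ[X]) ^ m).natDegree ≤ m * 2 := by
    refine natDegree_pow_le_of_le m ((natDegree_sub_le 1 (X ^ 2)).trans ?_)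
    simp
  have h₂ := natDegree_iterate_derivative_legendreP_le n m
  have h₃ := natDegree_iterate_derivative_legendreP_le n' m
  rw [assocLegendreProdPoly]
  have h₄ := natDegree_mul_le (p := (1 - X ^ 2 : ℝ[X]) ^ m) (q := derivative^[m] (legendreP n))
  have h₅ := natDegree_mul_le (p := (1 - X ^ 2 : ℝ[X]) ^ m * derivative^[m] (legendreP n))
    (q := derivative^[m] (legendreP n'))
  omega

theorem integral_assocLegendreProdPoly_succ (n n' m : ℕ) :
    ∫ x in (-1 : ℝ)..1, (assocLegendreProdPoly n n' (m + 1)).eval x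
      = (n * (n + 1) - m * (m + 1))
        * ∫ x in (-1 : ℝ)..1, (assocLegendreProdPoly n n' m).eval x := by
  have hbdry : ∀ x : ℝ, x ^ 2 = 1 →
      ((1 - X ^ 2) ^ (m + 1) * derivative^[m + 1] (legendreP n)).eval x = 0 := by
    intro x hx
    simp [hx]
  rw [assocLegendreProdPoly, Function.iterate_succ_apply' _ m (legendreP n'),
    integral_eval_mul_derivative_of_eval_eq_zero _ (hbdry (-1) (by norm_num)) (hbdry 1 (by norm_num)),
    derivative_one_sub_sq_pow_mul_iterate_derivative_legendreP,
    ← intervalIntegral.integral_const_mul, ← intervalIntegral.integral_neg]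
  congr 1 with x
  simp only [assocLegendreProdPoly, eval_mul, eval_neg, eval_C]
  ring

theorem integral_assocLegendreProdPoly {n m : ℕ} (n' : ℕ) (hmn : m ≤ n) :
    ∫ x in (-1 : ℝ)..1, (assocLegendreProdPoly n n' m).eval x
      = ((n + m)! / (n - m)! : ℝ) * if n = n' then (2 : ℝ) / (2 * n + 1) else 0 := by
  induction m with
  | zero =>
    simp only [assocLegendreProdPoly, pow_zero, one_mul, Function.iterate_zero_apply,
      integral_legendreP_mul_legendreP, add_zero, Nat.sub_zero]
    rw [div_self (by positivity), one_mul]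
  | succ m ih =>
    have hratio : (n * (n + 1) - m * (m + 1) : ℝ) * ((n + m)! / (n - m)!)
        = (n + (m + 1))! / (n - (m + 1))! := by
      obtain ⟨k, rfl⟩ : ∃ k, n = m + 1 + k := ⟨n - (m + 1), by omega⟩
      rw [show m + 1 + k - m = k + 1 by omega, show m + 1 + k - (m + 1) = k by omega,
        ← add_assoc, Nat.factorial_succ (m + 1 + k + m), Nat.factorial_succ k]
      field_simp
      push_cast
      ring
    rw [integral_assocLegendreProdPoly_succ, ih (by omega), ← mul_assoc, hratio]

theorem assocLegendre_discrete_orthogonality_general (Q : ℕ) (t ω : ℕ → ℝ)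
    (ht : ∀ k < Q, t k ∈ Set.Icc (-1 : ℝ) 1)
    (hexact : ∀ p : Polynomial ℝ, p.natDegree ≤ 2 * Q - 1 →
      (∫ x in (-1 : ℝ)..1, p.eval x) = ∑ k ∈ Finset.range Q, ω k * p.eval (t k))
    (m n n' : ℕ) (hmn : m ≤ n) (hmn' : m ≤ n') (hsum : n + n' ≤ 2 * Q - 1) :
    (∑ k ∈ Finset.range Q, ω k * assocLegendre n m (t k) * assocLegendre n' m (t k))
      = if n = n' then
          (2 / (2 * (n : ℝ) + 1)) * (Nat.factorial (n + m) : ℝ) /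
            (Nat.factorial (n - m) : ℝ)
        else 0 := by
  calc ∑ k ∈ Finset.range Q, ω k * assocLegendre n m (t k) * assocLegendre n' m (t k)
      = ∑ k ∈ Finset.range Q, ω k * (assocLegendreProdPoly n n' m).eval (t k) :=
        Finset.sum_congr rfl fun k hk => by
          rw [mul_assoc, assocLegendre_mul_assocLegendre (ht k (Finset.mem_range.mp hk))]
    _ = ∫ x in (-1 : ℝ)..1, (assocLegendreProdPoly n n' m).eval x :=
        (hexact _ ((natDegree_assocLegendreProdPoly_le hmn hmn').trans hsum)).symm
    _ = _ := by
      rw [integral_assocLegendreProdPoly n' hmn]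
      split_ifs <;> ring

/-- Discrete orthogonality of the associated Legendre functions under Gauss–Legendre
quadrature: for `m ≤ n, n' ≤ Q-1` with `n + n' ≤ 2Q-1`,
`Σ_k ω_k P_{n,m}(t_k) P_{n',m}(t_k) = (2/(2n+1)) ((n+m)!/(n-m)!) δ_n^{n'}`. -/
theorem assocLegendre_discrete_orthogonality (Q : ℕ) (hQ : 1 ≤ Q) (t ω : ℕ → ℝ)
    (ht : ∀ k < Q, t k ∈ Set.Icc (-1 : ℝ) 1)
    (hroot : ∀ k < Q, (legendreP Q).eval (t k) = 0)
    (hdist : ∀ i j, i < j → j < Q → t i < t j)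
    (hexact : ∀ p : Polynomial ℝ, p.natDegree ≤ 2 * Q - 1 →
      (∫ x in (-1 : ℝ)..1, p.eval x) = ∑ k ∈ Finset.range Q, ω k * p.eval (t k))
    (m n n' : ℕ) (hmn : m ≤ n) (hmn' : m ≤ n')
    (hnQ : n ≤ Q - 1) (hn'Q : n' ≤ Q - 1) (hsum : n + n' ≤ 2 * Q - 1) :
    (∑ k ∈ Finset.range Q, ω k * assocLegendre n m (t k) * assocLegendre n' m (t k))
      = if n = n' then
          (2 / (2 * (n : ℝ) + 1)) * (Nat.factorial (n + m) : ℝ) /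
            (Nat.factorial (n - m) : ℝ)
        else 0 :=
  assocLegendre_discrete_orthogonality_general Q t ω ht hexact m n n' hmn hmn' hsum
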